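/- arXiv:1310.4905 — 5 statements merged into one kernel-verified Lean document; each statement's English description precedes it below -/
import Mathlib

section
/- If A is an invertible 2×2 integer matrix (an element of GL(2,ℤ)) of finite order, then its order is 1, 2, 3, 4, or 6. -/
/-!
By Cayley–Hamilton `M ^ 2 = t • M - d • 1` with `t = trace M` and `d = det M = ±1`, so the traces
`s k = trace (M ^ k)` satisfy `s (k + 2) = t * s (k + 1) - d * s k`. If `|t| > 2` then `|s k|` is
strictly increasing and can never return to `s 0 = 2`, so finite order forces `|t| ≤ 2`; applied
to `M ^ 2`, whose trace is `t ^ 2 - 2 * d`, this also forces `t = 0` when `d = -1`. The few remaining characteristic polynomials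
either divide `X ^ 4 - 1` or `X ^ 6 - 1`, or are `(X ∓ 1) ^ 2`, in which case `M` or `M ^ 2` is
unipotent of finite order, hence trivial since `(1 + N) ^ n = 1 + n • N` when `N ^ 2 = 0`.
-/

open Polynomial

theorem one_add_pow_of_sq_eq_zero {R : Type*} [Ring R] {y : R} (hy : y ^ 2 = 0) (n : ℕ) :
    (1 + y) ^ n = 1 + n • y := by
  induction n with
  | zero => simp
  | succ n ih =>
    rw [pow_succ, ih, add_mul, one_mul, mul_add, mul_one, smul_mul_assoc, ← sq, hy, smul_zero,
      add_zero, succ_nsmul]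
    abel

theorem IsOfFinOrder.eq_one_of_sq_sub_one_eq_zero {R : Type*} [Ring R] [Module.IsTorsionFree ℤ R]
    {x : R} (hx : IsOfFinOrder x) (h : (x - 1) ^ 2 = 0) : x = 1 := by
  obtain ⟨n, hn, hxn⟩ := isOfFinOrder_iff_pow_eq_one.1 hx
  have hpow := one_add_pow_of_sq_eq_zero h n
  rw [add_sub_cancel, hxn, left_eq_add, ← natCast_zsmul, smul_eq_zero] at hpow
  exact sub_eq_zero.1 (hpow.resolve_left (by exact_mod_cast hn.ne'))

theorem strictMono_abs_of_recurrence {R : Type*} [CommRing R] [LinearOrder R] [IsStrictOrderedRing R]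
    {s : ℕ → R} {t d : R} (htd : 1 + |d| < |t|) (hs : ∀ k, s (k + 2) = t * s (k + 1) - d * s k)
    (h01 : |s 0| < |s 1|) : StrictMono fun k => |s k| := by
  refine strictMono_nat_of_lt_succ fun k => ?_
  induction k with
  | zero => exact h01
  | succ k ih =>
    have hlow : |t| * |s (k + 1)| - |d| * |s k| ≤ |s (k + 2)| := by
      rw [hs, ← abs_mul, ← abs_mul]
      exact abs_sub_abs_le_abs_sub _ _
    have hd : |d| * |s k| ≤ |d| * |s (k + 1)| := mul_le_mul_of_nonneg_left ih.le (abs_nonneg d)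
    have hgap : (1 + |d|) * |s (k + 1)| < |t| * |s (k + 1)| :=
      mul_lt_mul_of_pos_right htd ((abs_nonneg _).trans_lt ih)
    linarith

namespace Matrix

section CommRing

variable {R : Type*} [CommRing R]

theorem aeval_eq_zero_of_charpoly_dvd {n : Type*} [Fintype n] [DecidableEq n] {M : Matrix n n R}
    {p : R[X]} (h : M.charpoly ∣ p) : aeval M p = 0 := by
  obtain ⟨q, rfl⟩ := h
  rw [map_mul, aeval_self_charpoly, zero_mul]

theorem pow_eq_one_of_charpoly_dvd {n : Type*} [Fintype n] [DecidableEq n] {M : Matrix n n R}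
    {k : ℕ} (h : M.charpoly ∣ X ^ k - 1) : M ^ k = 1 := by
  simpa [sub_eq_zero] using aeval_eq_zero_of_charpoly_dvd h

theorem sq_eq_trace_smul_sub_det_smul_one [Nontrivial R] (M : Matrix (Fin 2) (Fin 2) R) :
    M ^ 2 = M.trace • M - M.det • 1 := by
  have h := M.aeval_self_charpoly
  rw [charpoly_fin_two, map_add, map_sub, map_mul, aeval_X_pow, aeval_X, aeval_C, aeval_C,
    Algebra.algebraMap_eq_smul_one, Algebra.algebraMap_eq_smul_one, smul_one_mul] at h
  rw [← sub_eq_zero, ← h]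
  abel

theorem trace_pow_add_two [Nontrivial R] (M : Matrix (Fin 2) (Fin 2) R) (k : ℕ) :
    trace (M ^ (k + 2)) = trace M * trace (M ^ (k + 1)) - det M * trace (M ^ k) := by
  rw [pow_add, sq_eq_trace_smul_sub_det_smul_one, mul_sub, mul_smul_comm, mul_smul_comm, mul_one,
    ← pow_succ, trace_sub, trace_smul, trace_smul, smul_eq_mul, smul_eq_mul]

end CommRing

theorem abs_trace_le_two_of_isOfFinOrder {M : Matrix (Fin 2) (Fin 2) ℤ} (hM : IsOfFinOrder M) :
    |M.trace| ≤ 2 := by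
  by_contra! htr
  obtain ⟨n, hn, hMn⟩ := isOfFinOrder_iff_pow_eq_one.1 hM
  have hdet : |M.det| = 1 := Int.isUnit_iff_abs_eq.1 ((isUnit_iff_isUnit_det M).1 hM.isUnit)
  have hmono := strictMono_abs_of_recurrence (s := fun k => trace (M ^ k)) (by omega)
    (trace_pow_add_two M) (by simpa using htr)
  simpa [hMn] using hmono hn

theorem trace_eq_zero_of_isOfFinOrder_of_det_eq_neg_one {M : Matrix (Fin 2) (Fin 2) ℤ}
    (hM : IsOfFinOrder M) (hdet : M.det = -1) : M.trace = 0 := by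
  have h := abs_trace_le_two_of_isOfFinOrder (hM.pow (n := 2))
  rw [sq_eq_trace_smul_sub_det_smul_one, trace_sub, trace_smul, trace_smul, hdet, trace_one] at h
  simp only [smul_eq_mul, Fintype.card_fin, Nat.cast_ofNat, neg_mul, sub_neg_eq_add] at h
  nlinarith [abs_le.1 h]

theorem pow_four_eq_one_or_pow_six_eq_one_of_isOfFinOrder {M : Matrix (Fin 2) (Fin 2) ℤ}
    (hM : IsOfFinOrder M) : M ^ 4 = 1 ∨ M ^ 6 = 1 := by
  have hchar : M.charpoly = X ^ 2 - (M.trace : ℤ[X]) * X + (M.det : ℤ[X]) := by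
    simpa only [eq_intCast] using charpoly_fin_two M
  have ht := abs_le.1 (abs_trace_le_two_of_isOfFinOrder hM)
  rcases Int.isUnit_iff.1 ((isUnit_iff_isUnit_det M).1 hM.isUnit) with hdet | hdet
  · obtain htr | htr | htr | htr | htr :
        M.trace = -2 ∨ M.trace = -1 ∨ M.trace = 0 ∨ M.trace = 1 ∨ M.trace = 2 := by omega
    all_goals rw [hdet, htr] at hchar
    · left
      have hunip : (M ^ 2 - 1) ^ 2 = 0 := by
        have h := aeval_eq_zero_of_charpoly_dvd (M := M) (p := (X ^ 2 - 1) ^ 2)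
          ⟨(X - 1) ^ 2, by rw [hchar]; ring⟩
        simpa using h
      rw [show 4 = 2 * 2 from rfl, pow_mul, hM.pow.eq_one_of_sq_sub_one_eq_zero hunip, one_pow]
    · exact .inr <| pow_eq_one_of_charpoly_dvd ⟨(X - 1) * (X ^ 3 + 1), by rw [hchar]; ring⟩
    · exact .inl <| pow_eq_one_of_charpoly_dvd ⟨X ^ 2 - 1, by rw [hchar]; ring⟩
    · exact .inr <| pow_eq_one_of_charpoly_dvd ⟨(X + 1) * (X ^ 3 - 1), by rw [hchar]; ring⟩
    · left
      have hunip : (M - 1) ^ 2 = 0 := by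
        have h := aeval_eq_zero_of_charpoly_dvd (M := M) (p := (X - 1) ^ 2)
          ⟨1, by rw [hchar]; ring⟩
        simpa using h
      rw [hM.eq_one_of_sq_sub_one_eq_zero hunip, one_pow]
  · rw [hdet, trace_eq_zero_of_isOfFinOrder_of_det_eq_neg_one hM hdet] at hchar
    exact .inl <| pow_eq_one_of_charpoly_dvd ⟨X ^ 2 + 1, by rw [hchar]; ring⟩

end Matrix

/-- Crystallographic restriction: an element of `GL(2, ℤ)` of finite order
has order `1`, `2`, `3`, `4`, or `6`. -/
theorem crystallographic_restriction_GL2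
    (A : GL (Fin 2) ℤ) (hA : IsOfFinOrder A) :
    orderOf A ∈ ({1, 2, 3, 4, 6} : Set ℕ) := by
  rw [← orderOf_units]
  obtain h | h := Matrix.pow_four_eq_one_or_pow_six_eq_one_of_isOfFinOrder
    (Units.isOfFinOrder_val.2 hA)
  all_goals
    have hdvd := orderOf_dvd_of_pow_eq_one h
    have hle := Nat.le_of_dvd (by norm_num) hdvd
    interval_cases orderOf (A : Matrix (Fin 2) (Fin 2) ℤ) <;> simp_all
end

section
/- If A is an invertible 3×3 integer matrix (an element of GL(3,ℤ)) of finite order, then its order is 1, 2, 3, 4, or 6. -/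
open Polynomial

/-- If `φ d ≤ 3` and `0 < d`, then `d ∣ 12`. -/
lemma totient_le_three_dvd_twelve {d : ℕ} (hd : 0 < d) (h : d.totient ≤ 3) : d ∣ 12 := by
  have hdvd : ∀ m : ℕ, m ∣ d → m.totient ∣ d.totient := fun m hm => Nat.totient_dvd_of_dvd hm
  have hφpos : 0 < d.totient := Nat.totient_pos.mpr hd
  rw [Nat.dvd_iff_prime_pow_dvd_dvd]
  intro p k hp hpk
  rcases Nat.eq_zero_or_pos k with rfl | hk
  · simp
  have hpd : p ∣ d := dvd_trans (dvd_pow_self p hk.ne') hpk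
  have hple : p ≤ 4 := by
    have h1 : (p - 1) ∣ d.totient := by
      have := hdvd p hpd
      rwa [Nat.totient_prime hp] at this
    have h2 : p - 1 ≤ 3 := le_trans (Nat.le_of_dvd hφpos h1) h
    omega
  have hp2 : p = 2 ∨ p = 3 := by
    have h2le := hp.two_le
    interval_cases p
    · exact Or.inl rfl
    · exact Or.inr rfl
    · exact absurd hp (by decide)
  rcases hp2 with rfl | rfl
  · -- p = 2 : k ≤ 2
    have hk2 : k ≤ 2 := by
      by_contra hk3
      have h8 : (8 : ℕ) ∣ d := dvd_trans (pow_dvd_pow 2 (by omega : 3 ≤ k)) hpk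
      have h8t : Nat.totient 8 = 4 := by decide
      have hle := Nat.le_of_dvd hφpos (h8t ▸ hdvd 8 h8)
      omega
    calc (2 : ℕ) ^ k ∣ 2 ^ 2 := pow_dvd_pow 2 hk2
      _ ∣ 12 := by norm_num
  · -- p = 3 : k ≤ 1
    have hk1 : k ≤ 1 := by
      by_contra hk2
      have h9 : (9 : ℕ) ∣ d := by
        have : (3:ℕ) ^ 2 ∣ 3 ^ k := pow_dvd_pow 3 (by omega)
        calc (9:ℕ) = 3 ^ 2 := by norm_num
          _ ∣ 3 ^ k := this
          _ ∣ d := hpk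
      have h9t : Nat.totient 9 = 6 := by decide
      have hle := Nat.le_of_dvd hφpos (h9t ▸ hdvd 9 h9)
      omega
    calc (3 : ℕ) ^ k ∣ 3 ^ 1 := pow_dvd_pow 3 hk1
      _ ∣ 12 := by norm_num

/-- Crystallographic restriction: an element of `GL(3, ℤ)` of finite order
has order `1`, `2`, `3`, `4`, or `6`. -/
theorem crystallographic_restriction_GL3
    (A : GL (Fin 3) ℤ) (hA : IsOfFinOrder A) :
    orderOf A ∈ ({1, 2, 3, 4, 6} : Set ℕ) := by
  classical
  set n := orderOf A with hn
  have hnpos : 0 < n := hA.orderOf_pos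
  -- map to rational matrices
  let f : GL (Fin 3) ℤ →* Matrix (Fin 3) (Fin 3) ℚ :=
    ((Int.castRingHom ℚ).mapMatrix.toMonoidHom).comp (Units.coeHom (Matrix (Fin 3) (Fin 3) ℤ))
  have hf : Function.Injective f := by
    intro a b hab
    apply Units.ext
    have : Function.Injective ((Int.castRingHom ℚ).mapMatrix :
        Matrix (Fin 3) (Fin 3) ℤ →+* Matrix (Fin 3) (Fin 3) ℚ) := by
      intro x y hxy
      ext i j
      have h' : ((x i j : ℤ) : ℚ) = ((y i j : ℤ) : ℚ) := by
        simpa [RingHom.mapMatrix_apply, Matrix.map_apply] using congrFun (congrFun hxy i) j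
      exact_mod_cast h'
    exact this hab
  set M : Matrix (Fin 3) (Fin 3) ℚ := f A with hM
  have hMn : M ^ n = 1 := by
    rw [hM, ← map_pow, pow_orderOf_eq_one, map_one]
  have horder : ∀ k : ℕ, M ^ k = 1 → n ∣ k := by
    intro k hk
    have hAk : A ^ k = 1 := hf (by rw [map_pow, map_one]; exact hk)
    exact orderOf_dvd_of_pow_eq_one hAk
  have hint : IsIntegral ℚ M :=
    ⟨X ^ n - 1, monic_X_pow_sub (p := (1 : ℚ[X])) (by rw [Polynomial.degree_one]; exact_mod_cast hnpos), by simp [hMn]⟩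
  have hminne : minpoly ℚ M ≠ 0 := minpoly.ne_zero hint
  have hmin_dvd : minpoly ℚ M ∣ X ^ n - 1 := minpoly.dvd ℚ M (by simp [hMn])
  -- degree bound
  have hdeg3 : (minpoly ℚ M).natDegree ≤ 3 := by
    calc (minpoly ℚ M).natDegree ≤ M.charpoly.natDegree :=
          Polynomial.natDegree_le_of_dvd (Matrix.minpoly_dvd_charpoly M)
            (Matrix.charpoly_monic M).ne_zero
      _ = 3 := by rw [Matrix.charpoly_natDegree_eq_dim]; simp
  -- the set of cyclotomic factors
  set S : Finset ℕ := n.divisors.filter (fun d => cyclotomic d ℚ ∣ minpoly ℚ M) with hS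
  have hSpos : ∀ d ∈ S, 0 < d := fun d hd =>
    Nat.pos_of_mem_divisors (Finset.mem_filter.mp hd).1
  -- product of cyclotomics over S divides the minimal polynomial
  have hprod : (∏ d ∈ S, cyclotomic d ℚ) ∣ minpoly ℚ M := by
    apply Finset.prod_dvd_of_coprime
    · intro a _ b _ hab
      exact cyclotomic.isCoprime_rat hab
    · intro d hd
      exact (Finset.mem_filter.mp hd).2
  -- sum of totients ≤ 3
  have hsum : (∑ d ∈ S, Nat.totient d) ≤ 3 := by
    have h1 : (∏ d ∈ S, cyclotomic d ℚ).natDegree = ∑ d ∈ S, Nat.totient d := by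
      rw [Polynomial.natDegree_prod _ _ (fun d _ => cyclotomic_ne_zero d ℚ)]
      exact Finset.sum_congr rfl fun d _ => natDegree_cyclotomic d ℚ
    calc (∑ d ∈ S, Nat.totient d) = (∏ d ∈ S, cyclotomic d ℚ).natDegree := h1.symm
      _ ≤ (minpoly ℚ M).natDegree := Polynomial.natDegree_le_of_dvd hprod hminne
      _ ≤ 3 := hdeg3
  -- the minimal polynomial divides the product over S
  have hmin_S : minpoly ℚ M ∣ ∏ d ∈ S, cyclotomic d ℚ := by
    have hsplit : minpoly ℚ M ∣
        (∏ d ∈ S, cyclotomic d ℚ) * ∏ d ∈ n.divisors \ S, cyclotomic d ℚ := by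
      have : (∏ d ∈ S, cyclotomic d ℚ) * ∏ d ∈ n.divisors \ S, cyclotomic d ℚ
          = ∏ d ∈ n.divisors, cyclotomic d ℚ := by
        rw [mul_comm]
        exact Finset.prod_sdiff (Finset.filter_subset _ _)
      rw [this, prod_cyclotomic_eq_X_pow_sub_one hnpos]
      exact hmin_dvd
    have hcop : IsCoprime (minpoly ℚ M) (∏ d ∈ n.divisors \ S, cyclotomic d ℚ) := by
      apply IsCoprime.prod_right
      intro d hd
      have hdpos : 0 < d := Nat.pos_of_mem_divisors (Finset.mem_sdiff.mp hd).1
      have hnd : ¬ cyclotomic d ℚ ∣ minpoly ℚ M := by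
        have h2 := (Finset.mem_sdiff.mp hd).2
        simp only [hS, Finset.mem_filter, not_and] at h2
        exact h2 (Finset.mem_sdiff.mp hd).1
      exact ((cyclotomic.irreducible_rat hdpos).coprime_iff_not_dvd.mpr hnd).symm
    exact hcop.dvd_of_dvd_mul_right hsplit
  -- n = lcm S
  set L : ℕ := S.lcm id with hL
  have hLn : L ∣ n := Finset.lcm_dvd fun d hd => (Nat.mem_divisors.mp (Finset.mem_filter.mp hd).1).1
  have hLpos : 0 < L := Nat.pos_of_dvd_of_pos hLn hnpos
  have hSsub : S ⊆ L.divisors := by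
    intro d hd
    exact Nat.mem_divisors.mpr ⟨Finset.dvd_lcm hd, hLpos.ne'⟩
  have hnL : n ∣ L := by
    apply horder
    have hdvdXL : minpoly ℚ M ∣ X ^ L - 1 := by
      refine hmin_S.trans ?_
      rw [← prod_cyclotomic_eq_X_pow_sub_one hLpos]
      exact Finset.prod_dvd_prod_of_subset _ _ _ hSsub
    obtain ⟨q, hq⟩ := hdvdXL
    have h0 : (Polynomial.aeval M) (X ^ L - 1 : ℚ[X]) = 0 := by
      rw [hq, map_mul, minpoly.aeval, zero_mul]
    simpa [sub_eq_zero] using h0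
  have hnLeq : n = L := Nat.dvd_antisymm hnL hLn
  -- S is contained in the divisors of 12
  have hS12 : S ⊆ Nat.divisors 12 := by
    intro d hd
    have hdpos := hSpos d hd
    have hφ : d.totient ≤ 3 := by
      have h1 : (cyclotomic d ℚ).natDegree ≤ (minpoly ℚ M).natDegree :=
        Polynomial.natDegree_le_of_dvd (Finset.mem_filter.mp hd).2 hminne
      rw [natDegree_cyclotomic] at h1
      exact h1.trans hdeg3
    exact Nat.mem_divisors.mpr ⟨totient_le_three_dvd_twelve hdpos hφ, by norm_num⟩
  -- finite check
  have key : ∀ T ∈ (Nat.divisors 12).powerset,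
      (∑ d ∈ T, Nat.totient d) ≤ 3 → T.lcm id ∈ ({1, 2, 3, 4, 6} : Finset ℕ) := by decide
  have hmem : L ∈ ({1, 2, 3, 4, 6} : Finset ℕ) :=
    key S (Finset.mem_powerset.mpr hS12) hsum
  rw [hnLeq]
  simpa using hmem
end

section
/- Let L be a full-rank lattice in ℝ², i.e. the ℤ-span of an ℝ-basis of ℝ². If Q is a linear isometry of ℝ² (an element of the orthogonal group O(2)) that maps L onto itself, then Q has finite order, and its order is 1, 2, 3, 4, or 6. -/
/-!
In a basis of the lattice the matrix of `Q` is integral, so `t = tr Q` is an integer, and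
Cayley–Hamilton gives `Q² = t Q - det Q` with `det Q = ±1`. Since `Q` is an isometry,
`⟪Q² v, Q v⟫ = ⟪Q v, v⟫`; this forces `t = 0` (so `Q² = 1`) when `det Q = -1`, and gives
`‖Q v ∓ v‖² = (2 ∓ t) ‖v‖²` when `det Q = 1`, so that `|t| ≤ 2` with `Q = ±1` if `|t| = 2`.
For `t = -1, 0, 1` the relation `Q² = t Q - 1` yields `Q³ = 1`, `Q⁴ = 1`, `Q⁶ = 1`.
-/

open Module Submodule LinearMap
open scoped RealInnerProductSpace

theorem LinearMap.trace_mem_range_algebraMap_of_map_mem_span {R S M ι : Type*} [CommRing R]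
    [IsDomain R] [CommRing S] [Nontrivial S] [AddCommGroup M] [Algebra R S] [Module S M]
    [Module R M] [IsScalarTower R S M] [IsTorsionFree R S] [Fintype ι] [DecidableEq ι]
    (b : Basis ι S M) (f : M →ₗ[S] M) (hf : ∀ i, f (b i) ∈ span R (Set.range b)) :
    trace S M f ∈ (algebraMap R S).range := by
  rw [trace_eq_matrix_trace S b, Matrix.trace]
  exact Subring.sum_mem _ fun i _ ↦ by
    simpa [toMatrix_apply] using (b.mem_span_iff_repr_mem R _).1 (hf i) i

theorem LinearMap.sq_eq_trace_smul_sub_det_smul {R M : Type*} [CommRing R] [Nontrivial R]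
    [AddCommGroup M] [Module R M] [Module.Free R M] [Module.Finite R M] (h : finrank R M = 2)
    (f : M →ₗ[R] M) : f ^ 2 = trace R M f • f - LinearMap.det f • 1 := by
  have hχ : f.charpoly = Polynomial.X ^ 2 - Polynomial.C (trace R M f) * Polynomial.X
      + Polynomial.C (LinearMap.det f) := by
    rw [← charpoly_toMatrix f (finBasisOfFinrankEq R M h), Matrix.charpoly_fin_two,
      trace_eq_matrix_trace R (finBasisOfFinrankEq R M h), det_toMatrix]
  have := aeval_self_charpoly f
  rw [hχ] at this
  simp only [map_add, map_sub, map_pow, map_mul, Polynomial.aeval_X, Polynomial.aeval_C] at this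
  rw [← sub_eq_zero, ← this, Algebra.algebraMap_eq_smul_one, Algebra.algebraMap_eq_smul_one,
    smul_mul_assoc, one_mul]
  abel

theorem pow_four_or_pow_six_eq_one_of_sq_eq {R : Type*} [Ring R] {x : R} {t : ℤ} (ht : |t| ≤ 1)
    (h : x ^ 2 = t • x - 1) : x ^ 4 = 1 ∨ x ^ 6 = 1 := by
  obtain rfl | rfl | rfl : t = -1 ∨ t = 0 ∨ t = 1 := by have := abs_le.1 ht; omega
  · rw [neg_smul, one_smul] at h
    have h3 : x ^ 3 = 1 := by
      calc x ^ 3 = x * x ^ 2 := by noncomm_ring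
        _ = x * (-x - 1) := by rw [h]
        _ = -x ^ 2 - x := by noncomm_ring
        _ = 1 := by rw [h]; noncomm_ring
    right
    rw [show 6 = 3 * 2 from rfl, pow_mul, h3, one_pow]
  · rw [zero_smul, zero_sub] at h
    left
    rw [show 4 = 2 * 2 from rfl, pow_mul, h]; noncomm_ring
  · rw [one_smul] at h
    have h3 : x ^ 3 = -1 := by
      calc x ^ 3 = x * x ^ 2 := by noncomm_ring
        _ = x * (x - 1) := by rw [h]
        _ = x ^ 2 - x := by noncomm_ring
        _ = -1 := by rw [h]; noncomm_ring
    right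
    rw [show 6 = 3 * 2 from rfl, pow_mul, h3]; noncomm_ring

theorem orderOf_mem_of_pow_four_or_pow_six {G : Type*} [Monoid G] {x : G}
    (h : x ^ 4 = 1 ∨ x ^ 6 = 1) :
    IsOfFinOrder x ∧ orderOf x ∈ ({1, 2, 3, 4, 6} : Set ℕ) := by
  obtain ⟨n, hn, hxn, hdiv⟩ : ∃ n ≠ 0, x ^ n = 1 ∧ n.divisors ⊆ {1, 2, 3, 4, 6} := by
    rcases h with h | h
    exacts [⟨4, by decide, h, by decide⟩, ⟨6, by decide, h, by decide⟩]
  refine ⟨isOfFinOrder_iff_pow_eq_one.2 ⟨n, Nat.pos_of_ne_zero hn, hxn⟩, ?_⟩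
  simpa using hdiv (Nat.mem_divisors.2 ⟨orderOf_dvd_of_pow_eq_one hxn, hn⟩)

namespace LinearIsometryEquiv

variable {R E : Type*} [Semiring R] [SeminormedAddCommGroup E] [Module R E]

def toLinearMapMonoidHom : (E ≃ₗᵢ[R] E) →* Module.End R E where
  toFun Q := Q.toLinearIsometry.toLinearMap
  map_one' := rfl
  map_mul' _ _ := rfl

theorem toLinearMapMonoidHom_injective :
    Function.Injective (toLinearMapMonoidHom : (E ≃ₗᵢ[R] E) →* Module.End R E) :=
  fun _ _ h ↦ ext (LinearMap.congr_fun h)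

end LinearIsometryEquiv

namespace LinearIsometry

variable {E : Type*} [NormedAddCommGroup E] [InnerProductSpace ℝ E] (Q : E →ₗᵢ[ℝ] E)
variable {t c : ℝ}

theorem mul_norm_sq_eq_of_sq_eq (h : Q.toLinearMap ^ 2 = t • Q.toLinearMap + c • 1) (v : E) :
    t * ‖v‖ ^ 2 = (1 - c) * ⟪v, Q v⟫ := by
  have hQQ : Q (Q v) = t • Q v + c • v := by simpa [sq] using LinearMap.congr_fun h v
  have := Q.inner_map_map (Q v) v
  rw [hQQ, inner_add_left, real_inner_smul_left, real_inner_smul_left, real_inner_self_eq_norm_sq,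
    Q.norm_map, real_inner_comm v] at this
  linarith

theorem norm_map_sub_sq_of_sq_eq (h : Q.toLinearMap ^ 2 = t • Q.toLinearMap - 1) (v : E) :
    ‖Q v - v‖ ^ 2 = (2 - t) * ‖v‖ ^ 2 := by
  have := Q.mul_norm_sq_eq_of_sq_eq (t := t) (c := -1) (by rw [h, neg_one_smul, sub_eq_add_neg]) v
  rw [norm_sub_sq_real, Q.norm_map, real_inner_comm]
  linarith

theorem norm_map_add_sq_of_sq_eq (h : Q.toLinearMap ^ 2 = t • Q.toLinearMap - 1) (v : E) :
    ‖Q v + v‖ ^ 2 = (2 + t) * ‖v‖ ^ 2 := by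
  have := Q.mul_norm_sq_eq_of_sq_eq (t := t) (c := -1) (by rw [h, neg_one_smul, sub_eq_add_neg]) v
  rw [norm_add_sq_real, Q.norm_map, real_inner_comm]
  linarith

theorem sq_eq_one_of_sq_eq [Nontrivial E] (h : Q.toLinearMap ^ 2 = t • Q.toLinearMap + 1) :
    Q.toLinearMap ^ 2 = 1 := by
  obtain ⟨v, hv⟩ := exists_ne (0 : E)
  have := Q.mul_norm_sq_eq_of_sq_eq (t := t) (c := 1) (by rw [h, one_smul]) v
  have ht : t = 0 := by
    rw [sub_self, zero_mul] at this
    exact (mul_eq_zero.1 this).resolve_right (by positivity)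
  rw [h, ht, zero_smul, zero_add]

theorem pow_four_or_pow_six_eq_one_of_sq_eq [Nontrivial E] {n : ℤ}
    (h : Q.toLinearMap ^ 2 = (n : ℝ) • Q.toLinearMap - 1) :
    Q.toLinearMap ^ 4 = 1 ∨ Q.toLinearMap ^ 6 = 1 := by
  obtain ⟨v, hv⟩ := exists_ne (0 : E)
  have hv2 : 0 < ‖v‖ ^ 2 := by positivity
  have hn : |n| ≤ 2 := by
    have := Q.norm_map_sub_sq_of_sq_eq h v
    have := Q.norm_map_add_sq_of_sq_eq h v
    have : |(n : ℝ)| ≤ 2 := abs_le.2 ⟨by nlinarith [sq_nonneg ‖Q v + v‖],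
      by nlinarith [sq_nonneg ‖Q v - v‖]⟩
    exact_mod_cast this
  obtain rfl | rfl | hn : n = 2 ∨ n = -2 ∨ |n| ≤ 1 := by rw [abs_le] at hn ⊢; omega
  · have : Q.toLinearMap = 1 := LinearMap.ext fun v ↦ by
      have := Q.norm_map_sub_sq_of_sq_eq h v
      norm_num at this
      exact sub_eq_zero.1 this
    simp [this]
  · have : Q.toLinearMap = -1 := LinearMap.ext fun v ↦ by
      have := Q.norm_map_add_sq_of_sq_eq h v
      norm_num at this
      exact eq_neg_of_add_eq_zero_left this
    norm_num [this]
  · exact _root_.pow_four_or_pow_six_eq_one_of_sq_eq hn (by rwa [← Int.cast_smul_eq_zsmul ℝ])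

theorem pow_four_or_pow_six_eq_one_of_trace_eq_intCast (hE : finrank ℝ E = 2) {n : ℤ}
    (hn : trace ℝ E Q.toLinearMap = n) : Q.toLinearMap ^ 4 = 1 ∨ Q.toLinearMap ^ 6 = 1 := by
  have : FiniteDimensional ℝ E := .of_finrank_eq_succ hE
  have : Nontrivial E := nontrivial_of_finrank_eq_succ hE
  have hCH := LinearMap.sq_eq_trace_smul_sub_det_smul hE Q.toLinearMap
  have hdet : |LinearMap.det Q.toLinearMap| = 1 := by
    rw [← LinearMap.normDet_eq_abs_det, Q.normDet_eq_one]
  rcases (abs_eq zero_le_one).1 hdet with hd | hd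
  · rw [hn, hd, one_smul] at hCH
    exact Q.pow_four_or_pow_six_eq_one_of_sq_eq hCH
  · rw [hd, neg_one_smul, sub_neg_eq_add] at hCH
    left
    rw [show 4 = 2 * 2 from rfl, pow_mul, Q.sq_eq_one_of_sq_eq hCH, one_pow]

end LinearIsometry

/-- Crystallographic restriction in the plane: a linear isometry of `ℝ²`
mapping a full-rank lattice onto itself has finite order `1`, `2`, `3`, `4`, or `6`. -/
theorem crystallographic_restriction_O2_lattice
    (b : Module.Basis (Fin 2) ℝ (EuclideanSpace ℝ (Fin 2)))
    (L : Submodule ℤ (EuclideanSpace ℝ (Fin 2)))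
    (hL : L = Submodule.span ℤ (Set.range b))
    (Q : EuclideanSpace ℝ (Fin 2) ≃ₗᵢ[ℝ] EuclideanSpace ℝ (Fin 2))
    (hQ : Q '' (L : Set (EuclideanSpace ℝ (Fin 2))) = (L : Set (EuclideanSpace ℝ (Fin 2)))) :
    IsOfFinOrder Q ∧ orderOf Q ∈ ({1, 2, 3, 4, 6} : Set ℕ) := by
  have hQb : ∀ i, Q (b i) ∈ span ℤ (Set.range b) := fun i ↦ by
    have : Q (b i) ∈ Q '' (L : Set (EuclideanSpace ℝ (Fin 2))) :=
      Set.mem_image_of_mem Q (hL ▸ subset_span ⟨i, rfl⟩)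
    rwa [hQ, hL] at this
  obtain ⟨n, hn⟩ :=
    LinearMap.trace_mem_range_algebraMap_of_map_mem_span b Q.toLinearIsometry.toLinearMap hQb
  have h : Q.toLinearMapMonoidHom ^ 4 = 1 ∨ Q.toLinearMapMonoidHom ^ 6 = 1 :=
    Q.toLinearIsometry.pow_four_or_pow_six_eq_one_of_trace_eq_intCast
      finrank_euclideanSpace_fin hn.symm
  refine orderOf_mem_of_pow_four_or_pow_six ?_
  simpa only [← map_pow, map_eq_one_iff _ LinearIsometryEquiv.toLinearMapMonoidHom_injective]
    using h
end

section
/- Let L be a full-rank lattice in ℝ³, i.e. the ℤ-span of an ℝ-basis of ℝ³. If Q is a linear isometry of ℝ³ (an element of the orthogonal group O(3)) that maps L onto itself, then Q has finite order, and its order is 1, 2, 3, 4, or 6. -/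
/-!
An isometry preserving the lattice `L` permutes the finitely many lattice vectors of each given
length, so it has finite order `n`. In a basis of `L` it has an integer matrix, whose minimal
polynomial over `ℚ` divides `X ^ n - 1 = ∏_{d ∣ n} Φ_d`; it is therefore the product of the
distinct `Φ_d`, `d ∈ S`, with `lcm S = n` and `∑_{d ∈ S} φ(d) ≤ 3`. Then `φ(d) ≤ 3` forces
`S ⊆ {1, 2, 3, 4, 6}`, and `4` cannot occur together with `3` or `6`.
-/

open Polynomial Finset

theorem Nat.mem_of_totient_le_three {d : ℕ} (hd : d ≠ 0) (h : d.totient ≤ 3) :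
    d ∈ ({1, 2, 3, 4, 6} : Finset ℕ) := by
  have hprime : ∀ p ∈ d.primeFactors, p ∈ ({2, 3} : Finset ℕ) := by
    intro p hp
    have hp' := Nat.prime_of_mem_primeFactors hp
    have hle : p.totient ≤ d.totient := Nat.le_of_dvd (Nat.totient_pos.2 (Nat.pos_of_ne_zero hd))
      (Nat.totient_dvd_of_dvd (Nat.dvd_of_mem_primeFactors hp))
    rw [Nat.totient_prime hp'] at hle
    have hp4 : p ≤ 4 := by omega
    have hp2 := hp'.two_le
    interval_cases p
    · simp
    · simp
    · exact absurd hp' (by decide)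
  -- `φ(d) ∏_{p ∣ d} p = d ∏_{p ∣ d} (p - 1)` bounds `d` once its prime factors are known
  have hbound : d * ∏ p ∈ d.primeFactors, (p - 1) ≤ 3 * 6 := by
    rw [← Nat.totient_mul_prod_primeFactors]
    exact Nat.mul_le_mul h <|
      (prod_le_prod_of_subset_of_one_le' hprime (by simp)).trans (by decide)
  have hpos : 0 < ∏ p ∈ d.primeFactors, (p - 1) :=
    prod_pos fun p hp => by have := (Nat.prime_of_mem_primeFactors hp).two_le; omega
  have hd18 : d ≤ 18 := by nlinarith
  interval_cases d <;> revert h hd <;> decide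

theorem Nat.lcm_mem_of_sum_totient_le_three {S : Finset ℕ} (h0 : 0 ∉ S)
    (h : ∑ d ∈ S, d.totient ≤ 3) : S.lcm id ∈ ({1, 2, 3, 4, 6} : Finset ℕ) := by
  have hS : S ∈ ({1, 2, 3, 4, 6} : Finset ℕ).powerset := mem_powerset.2 fun d hd =>
    Nat.mem_of_totient_le_three (ne_of_mem_of_not_mem hd h0)
      ((single_le_sum (fun _ _ => Nat.zero_le _) hd).trans h)
  exact (by decide : ∀ T ∈ ({1, 2, 3, 4, 6} : Finset ℕ).powerset,
    ∑ d ∈ T, d.totient ≤ 3 → T.lcm id ∈ ({1, 2, 3, 4, 6} : Finset ℕ)) S hS h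

theorem IsOfFinOrder.exists_prod_cyclotomic_dvd_minpoly {A : Type*} [Ring A] [Algebra ℚ A]
    {x : A} (hx : IsOfFinOrder x) :
    ∃ S ⊆ (orderOf x).divisors,
      (∏ d ∈ S, cyclotomic d ℚ) ∣ minpoly ℚ x ∧ orderOf x = S.lcm id := by
  classical
  have hn : 0 < orderOf x := hx.orderOf_pos
  have hroot : aeval x (X ^ orderOf x - 1 : ℚ[X]) = 0 := by simp [pow_orderOf_eq_one]
  let S := (orderOf x).divisors.filter (cyclotomic · ℚ ∣ minpoly ℚ x)
  have hK : S.lcm id ∣ orderOf x :=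
    Finset.lcm_dvd fun d hd => Nat.dvd_of_mem_divisors (mem_filter.1 hd).1
  refine ⟨S, filter_subset _ _, prod_dvd_of_coprime ?_ fun d hd => (mem_filter.1 hd).2,
    Nat.dvd_antisymm (orderOf_dvd_of_pow_eq_one ?_) hK⟩
  · exact fun d _ e _ hde => cyclotomic.isCoprime_rat hde
  have hdvd : minpoly ℚ x ∣ ∏ d ∈ S, cyclotomic d ℚ := by
    have := minpoly.dvd ℚ x hroot
    rw [← prod_cyclotomic_eq_X_pow_sub_one hn, ← prod_filter_mul_prod_filter_not
      (orderOf x).divisors (cyclotomic · ℚ ∣ minpoly ℚ x)] at this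
    refine IsCoprime.dvd_of_dvd_mul_right (IsCoprime.prod_right fun d hd => ?_) this
    rw [mem_filter] at hd
    exact ((cyclotomic.irreducible_rat (Nat.pos_of_mem_divisors hd.1)).coprime_iff_not_dvd.2
      hd.2).symm
  have hKpos : 0 < S.lcm id := Nat.pos_of_dvd_of_pos hK hn
  have hsub : S ⊆ (S.lcm id).divisors := fun d hd =>
    Nat.mem_divisors.2 ⟨Finset.dvd_lcm hd, hKpos.ne'⟩
  have := minpoly.dvd_iff.1 <| hdvd.trans <|
    (prod_dvd_prod_of_subset _ _ _ hsub).trans (prod_cyclotomic_eq_X_pow_sub_one hKpos ℚ).dvd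
  simpa [sub_eq_zero] using this

theorem Matrix.exists_sum_totient_le_of_isOfFinOrder {n : Type*} [Fintype n] [DecidableEq n]
    {A : Matrix n n ℚ} (hA : IsOfFinOrder A) :
    ∃ S ⊆ (orderOf A).divisors,
      ∑ d ∈ S, d.totient ≤ Fintype.card n ∧ orderOf A = S.lcm id := by
  obtain ⟨S, hS, hdvd, hlcm⟩ := hA.exists_prod_cyclotomic_dvd_minpoly
  refine ⟨S, hS, ?_, hlcm⟩
  calc ∑ d ∈ S, d.totient = (∏ d ∈ S, cyclotomic d ℚ).natDegree := by
        rw [natDegree_prod_of_monic _ _ fun d _ => cyclotomic.monic d ℚ]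
        simp only [natDegree_cyclotomic]
    _ ≤ (minpoly ℚ A).natDegree :=
        natDegree_le_of_dvd hdvd (minpoly.ne_zero (Algebra.IsIntegral.isIntegral A))
    _ ≤ A.charpoly.natDegree :=
        natDegree_le_of_dvd A.minpoly_dvd_charpoly A.charpoly_monic.ne_zero
    _ = Fintype.card n := A.charpoly_natDegree_eq_dim

theorem Matrix.orderOf_map_intCast {n R : Type*} [Fintype n] [DecidableEq n] [Ring R]
    [CharZero R] (N : Matrix n n ℤ) : orderOf (N.map (Int.cast : ℤ → R)) = orderOf N :=
  orderOf_injective (Int.castRingHom R).mapMatrix.toMonoidHom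
    (Matrix.map_injective Int.cast_injective) N

def LinearIsometryEquiv.toEnd {R E : Type*} [Semiring R] [SeminormedAddCommGroup E]
    [Module R E] : (E ≃ₗᵢ[R] E) →* Module.End R E where
  toFun g := g.toLinearEquiv.toLinearMap
  map_one' := rfl
  map_mul' _ _ := rfl

namespace Module.Basis

open Set Submodule

variable {ι E : Type*} [NormedAddCommGroup E] [NormedSpace ℝ E] (b : Basis ι ℝ E)

theorem finite_setOf_mapsTo_span [Finite ι] [ProperSpace E] :
    {g : E ≃ₗᵢ[ℝ] E | MapsTo g (span ℤ (range b)) (span ℤ (range b))}.Finite := by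
  have hinj : Function.Injective fun (g : E ≃ₗᵢ[ℝ] E) j => g (b j) := fun _ _ hgh =>
    LinearIsometryEquiv.toLinearEquiv_injective <| b.ext' fun j => congr_fun hgh j
  refine Set.Finite.of_finite_image ((Set.Finite.pi fun j =>
    ZSpan.setFinite_inter b (Metric.isBounded_sphere (x := 0) (r := ‖b j‖))).subset ?_)
    hinj.injOn
  rintro _ ⟨g, hg, rfl⟩ j -
  exact ⟨by simp, hg (subset_span (mem_range_self j))⟩

theorem isOfFinOrder_of_mapsTo_span [Finite ι] [ProperSpace E] {Q : E ≃ₗᵢ[ℝ] E}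
    (hQ : MapsTo Q (span ℤ (range b)) (span ℤ (range b))) : IsOfFinOrder Q := by
  have hpow : ∀ k : ℕ, MapsTo ⇑(Q ^ k) (span ℤ (range b)) (span ℤ (range b)) := by
    intro k
    induction k with
    | zero => exact mapsTo_id _
    | succ k ih => rw [pow_succ, LinearIsometryEquiv.coe_mul]; exact ih.comp hQ
  exact finite_powers.1 <| b.finite_setOf_mapsTo_span.subset fun _ ⟨k, hk⟩ => hk ▸ hpow k

theorem exists_intMatrix_eq_toMatrixAlgEquiv [Fintype ι] [DecidableEq ι] {f : E →ₗ[ℝ] E}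
    (hf : MapsTo f (span ℤ (range b)) (span ℤ (range b))) :
    ∃ N : Matrix ι ι ℤ, N.map (Int.cast : ℤ → ℝ) = LinearMap.toMatrixAlgEquiv b f := by
  have := fun j => (b.mem_span_iff_repr_mem ℤ _).1 (hf (subset_span (mem_range_self j)))
  choose N hN using this
  exact ⟨Matrix.of fun i j => N j i, by
    ext i j
    simpa [LinearMap.toMatrixAlgEquiv_apply] using hN j i⟩

theorem orderOf_toMatrixAlgEquiv [Fintype ι] [DecidableEq ι] (Q : E ≃ₗᵢ[ℝ] E) :
    orderOf (LinearMap.toMatrixAlgEquiv b (Q : E →ₗ[ℝ] E)) = orderOf Q :=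
  orderOf_injective ((LinearMap.toMatrixAlgEquiv b).toMonoidHom.comp LinearIsometryEquiv.toEnd)
    ((LinearMap.toMatrixAlgEquiv b).injective.comp fun _ _ hgh =>
      LinearIsometryEquiv.toLinearEquiv_injective (LinearEquiv.toLinearMap_injective hgh)) Q

end Module.Basis

/-- Crystallographic restriction in the plane: a linear isometry of `ℝ³`
mapping a full-rank lattice onto itself has finite order `1`, `2`, `3`, `4`, or `6`. -/
theorem crystallographic_restriction_O3_lattice
    (b : Module.Basis (Fin 3) ℝ (EuclideanSpace ℝ (Fin 3)))
    (L : Submodule ℤ (EuclideanSpace ℝ (Fin 3)))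
    (hL : L = Submodule.span ℤ (Set.range b))
    (Q : EuclideanSpace ℝ (Fin 3) ≃ₗᵢ[ℝ] EuclideanSpace ℝ (Fin 3))
    (hQ : Q '' (L : Set (EuclideanSpace ℝ (Fin 3))) = (L : Set (EuclideanSpace ℝ (Fin 3)))) :
    IsOfFinOrder Q ∧ orderOf Q ∈ ({1, 2, 3, 4, 6} : Set ℕ) := by
  subst hL
  have hmaps : Set.MapsTo Q (Submodule.span ℤ (Set.range b)) (Submodule.span ℤ (Set.range b)) :=
    fun x hx => hQ ▸ Set.mem_image_of_mem Q hx
  have hfin : IsOfFinOrder Q := b.isOfFinOrder_of_mapsTo_span hmaps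
  obtain ⟨N, hN⟩ := b.exists_intMatrix_eq_toMatrixAlgEquiv (f := (Q : _ →ₗ[ℝ] _)) hmaps
  have hord : orderOf (N.map (Int.cast : ℤ → ℚ)) = orderOf Q := by
    rw [Matrix.orderOf_map_intCast, ← Matrix.orderOf_map_intCast (R := ℝ), hN,
      b.orderOf_toMatrixAlgEquiv]
  obtain ⟨S, hS, hsum, hlcm⟩ :=
    Matrix.exists_sum_totient_le_of_isOfFinOrder (orderOf_pos_iff.1 (hord ▸ hfin.orderOf_pos))
  refine ⟨hfin, ?_⟩
  rw [← hord, hlcm]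
  simpa using Nat.lcm_mem_of_sum_totient_le_three
    (fun h0 => lt_irrefl 0 (Nat.pos_of_mem_divisors (hS h0))) hsum
end

section
/- Let G be a group of affine isometries of Euclidean 3-space (a subgroup of the group of affine isometry equivalences of ℝ³), and suppose that the set of vectors t such that the translation by t belongs to G is a full-rank lattice L in ℝ³. Then for every g ∈ G the linear part of g maps L onto L, and consequently the special group G_* of G, namely the image of G under the homomorphism sending each affine isometry to its linear part in O(3), is a finite group. -/
/-!
Conjugating the translation by `t` with `g` gives the translation by the linear part of `g`
applied to `t`, so linear parts of elements of `G` preserve the translation lattice. Such a linear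
isometry sends each basis vector of the lattice to a lattice vector of the same norm, of which
there are finitely many, and it is determined by these images.
-/

open Set Submodule

namespace AffineIsometryEquiv

variable {𝕜 V P : Type*} [NormedField 𝕜] [SeminormedAddCommGroup V] [NormedSpace 𝕜 V]
  [PseudoMetricSpace P] [NormedAddTorsor V P]

theorem linearIsometryEquiv_inv (g : P ≃ᵃⁱ[𝕜] P) :
    g⁻¹.linearIsometryEquiv = g.linearIsometryEquiv.symm :=
  rfl

theorem mul_constVAdd_mul_inv (g : P ≃ᵃⁱ[𝕜] P) (v : V) :
    g * constVAdd 𝕜 P v * g⁻¹ = constVAdd 𝕜 P (g.linearIsometryEquiv v) := by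
  ext p
  simp

def translations (G : Subgroup (P ≃ᵃⁱ[𝕜] P)) : Set V :=
  {v | constVAdd 𝕜 P v ∈ G}

theorem linearIsometryEquiv_mem_translations {G : Subgroup (P ≃ᵃⁱ[𝕜] P)} {g : P ≃ᵃⁱ[𝕜] P}
    (hg : g ∈ G) {v : V} (hv : v ∈ translations G) :
    g.linearIsometryEquiv v ∈ translations G := by
  show constVAdd 𝕜 P _ ∈ G
  rw [← mul_constVAdd_mul_inv]
  exact G.mul_mem (G.mul_mem hg hv) (G.inv_mem hg)

theorem image_linearIsometryEquiv_translations {G : Subgroup (P ≃ᵃⁱ[𝕜] P)}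
    {g : P ≃ᵃⁱ[𝕜] P} (hg : g ∈ G) :
    g.linearIsometryEquiv '' translations G = translations G := by
  refine Subset.antisymm (image_subset_iff.2 fun v hv ↦
    linearIsometryEquiv_mem_translations hg hv) fun v hv ↦ ⟨g.linearIsometryEquiv.symm v, ?_, ?_⟩
  · exact linearIsometryEquiv_inv g ▸ linearIsometryEquiv_mem_translations (G.inv_mem hg) hv
  · exact g.linearIsometryEquiv.apply_symm_apply v

end AffineIsometryEquiv

theorem ZSpan.finite_setOf_linearIsometryEquiv_apply_mem {ι E : Type*} [Finite ι]
    [NormedAddCommGroup E] [NormedSpace ℝ E] (b : Module.Basis ι ℝ E) :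
    {Q : E ≃ₗᵢ[ℝ] E | ∀ i, Q (b i) ∈ span ℤ (range b)}.Finite := by
  have := b.finiteDimensional_of_finite
  refine Finite.of_finite_image (f := fun Q i ↦ Q (b i)) ?_ fun Q₁ _ Q₂ _ hQ ↦ ?_
  · refine (Finite.pi fun i ↦ ZSpan.setFinite_inter b
      (Metric.isBounded_closedBall (x := 0) (r := ‖b i‖))).subset ?_
    rintro _ ⟨Q, hQ, rfl⟩ i -
    exact ⟨by simp, hQ i⟩
  · exact LinearIsometryEquiv.toLinearEquiv_injective (b.ext' (congrFun hQ))

/-- If the translations contained in a group `G` of affine isometries of `ℝ³` form a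
full-rank lattice `L`, then the linear part of every element of `G` maps `L` onto itself,
and the special group `G₊` of `G` (the image of `G` under the linear-part homomorphism)
is finite. -/
theorem special_group_finite
    (b : Module.Basis (Fin 3) ℝ (EuclideanSpace ℝ (Fin 3)))
    (L : Submodule ℤ (EuclideanSpace ℝ (Fin 3)))
    (hL : L = Submodule.span ℤ (Set.range b))
    (G : Subgroup (EuclideanSpace ℝ (Fin 3) ≃ᵃⁱ[ℝ] EuclideanSpace ℝ (Fin 3)))
    (hT : {t : EuclideanSpace ℝ (Fin 3) |
      AffineIsometryEquiv.constVAdd ℝ (EuclideanSpace ℝ (Fin 3)) t ∈ G}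
        = (L : Set (EuclideanSpace ℝ (Fin 3)))) :
    (∀ g ∈ G, g.linearIsometryEquiv '' (L : Set (EuclideanSpace ℝ (Fin 3)))
        = (L : Set (EuclideanSpace ℝ (Fin 3)))) ∧
    {Q : EuclideanSpace ℝ (Fin 3) ≃ₗᵢ[ℝ] EuclideanSpace ℝ (Fin 3) |
      ∃ g ∈ G, g.linearIsometryEquiv = Q}.Finite := by
  have hT : AffineIsometryEquiv.translations G = L := hT
  subst hL
  refine ⟨fun g hg ↦ hT ▸ AffineIsometryEquiv.image_linearIsometryEquiv_translations hg,
    (ZSpan.finite_setOf_linearIsometryEquiv_apply_mem b).subset ?_⟩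
  rintro _ ⟨g, hg, rfl⟩ i
  rw [← SetLike.mem_coe, ← hT]
  exact AffineIsometryEquiv.linearIsometryEquiv_mem_translations hg
    (hT ▸ subset_span (mem_range_self i))
end
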